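/- Let ν be an irrational number with continued-fraction convergents Pₙ/Qₙ, and let α ≥ 1. For the vector ω = (1, ν) ∈ ℝ², define Ψ_ω(Q) = sup{ |k₁ + k₂·ν|^{−1} : (k₁,k₂) ∈ ℤ², 0 < max(|k₁|,|k₂|) < Q } for Q ≥ 1. If ∑_{n=1}^∞ (log Q_{n+1}) / Qₙ^{1+1/α} = +∞, then ∫_1^∞ (log Ψ_ω(Q)) / Q^{1+1/α} dQ = +∞. -/

import Mathlib

open MeasureTheory ENNReal

/-- The denominator `Qₙ` of the `n`-th convergent of the continued fraction
expansion of a real number `ν`. -/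
noncomputable def cfDen (ν : ℝ) (n : ℕ) : ℝ :=
  (GenContFract.of ν).dens n

/-- For the vector `ω = (1, ν)`, the function
`Ψ_ω(Q) = sup { |k₁ + k₂ ν|⁻¹ : (k₁,k₂) ∈ ℤ², 0 < max (|k₁|, |k₂|) < Q }`. -/
noncomputable def PsiOmega (ν : ℝ) (Q : ℝ) : ℝ :=
  sSup {x : ℝ | ∃ k : ℤ × ℤ, 0 < max |k.1| |k.2| ∧ ((max |k.1| |k.2| : ℤ) : ℝ) < Q ∧
    x = |(k.1 : ℝ) + (k.2 : ℝ) * ν|⁻¹}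

section Aux

open GenContFract

lemma cf_not_term (ν : ℝ) (hν : Irrational ν) (n : ℕ) :
    ¬(GenContFract.of ν).TerminatedAt n := by
  intro h
  have ht : (GenContFract.of ν).Terminates := ⟨n, h⟩
  rw [GenContFract.terminates_iff_rat] at ht
  obtain ⟨q, hq⟩ := ht
  exact hν ⟨q, hq.symm⟩

lemma one_le_cfDen (ν : ℝ) (hν : Irrational ν) (n : ℕ) :
    (1 : ℝ) ≤ cfDen ν n := by
  have h := GenContFract.succ_nth_fib_le_of_nth_den (v := ν) (n := n)
    (Or.inr (cf_not_term ν hν _))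
  have : (1 : ℕ) ≤ Nat.fib (n + 1) := Nat.fib_pos.mpr (Nat.succ_pos n)
  calc (1:ℝ) ≤ (Nat.fib (n+1) : ℝ) := by exact_mod_cast this
    _ ≤ _ := h

lemma cfDen_mono (ν : ℝ) : Monotone (cfDen ν) :=
  monotone_nat_of_le_succ fun _ => GenContFract.of_den_mono

lemma cfDen_step (ν : ℝ) (hν : Irrational ν) (n : ℕ) :
    cfDen ν (n + 1) + cfDen ν n ≤ cfDen ν (n + 2) := by
  obtain ⟨gp, hgp⟩ : ∃ gp, (GenContFract.of ν).s.get? (n + 1) = some gp :=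
    Option.ne_none_iff_exists'.1 (cf_not_term ν hν (n + 1))
  have ha : gp.a = 1 := GenContFract.of_partNum_eq_one (partNum_eq_s_a hgp)
  have hb : (1 : ℝ) ≤ gp.b := GenContFract.of_one_le_get?_partDen (partDen_eq_s_b hgp)
  have hrec := GenContFract.dens_recurrence hgp rfl rfl
  unfold cfDen
  rw [hrec, ha]
  have h1 := one_le_cfDen ν hν (n + 1)
  unfold cfDen at h1
  nlinarith

lemma cf_int (ν : ℝ) (hν : Irrational ν) (n : ℕ) :
    (∃ p : ℤ, (GenContFract.of ν).nums n = p) ∧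
      ∃ q : ℤ, cfDen ν n = q := by
  have key : ∀ m : ℕ,
      ((∃ p : ℤ, (GenContFract.of ν).nums m = p) ∧ ∃ q : ℤ, (GenContFract.of ν).dens m = q) ∧
      ((∃ p : ℤ, (GenContFract.of ν).nums (m+1) = p) ∧
        ∃ q : ℤ, (GenContFract.of ν).dens (m+1) = q) := by
    intro m
    induction m with
    | zero =>
      obtain ⟨gp, hgp⟩ : ∃ gp, (GenContFract.of ν).s.get? 0 = some gp :=
        Option.ne_none_iff_exists'.1 (cf_not_term ν hν 0)
      obtain ⟨ha, z, hz⟩ := GenContFract.of_partNum_eq_one_and_exists_int_partDen_eq hgp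
      refine ⟨⟨⟨⌊ν⌋, ?_⟩, ⟨1, ?_⟩⟩, ⟨⟨z * ⌊ν⌋ + 1, ?_⟩, ⟨z, ?_⟩⟩⟩
      · rw [GenContFract.zeroth_num_eq_h, GenContFract.of_h_eq_floor]
      · rw [GenContFract.zeroth_den_eq_one]; norm_num
      · rw [GenContFract.first_num_eq hgp, ha, hz, GenContFract.of_h_eq_floor]; push_cast; ring
      · rw [GenContFract.first_den_eq hgp, hz]
    | succ m ih =>
      refine ⟨ih.2, ?_⟩
      obtain ⟨gp, hgp⟩ : ∃ gp, (GenContFract.of ν).s.get? (m + 1) = some gp :=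
        Option.ne_none_iff_exists'.1 (cf_not_term ν hν (m + 1))
      obtain ⟨ha, z, hz⟩ := GenContFract.of_partNum_eq_one_and_exists_int_partDen_eq hgp
      obtain ⟨⟨⟨p0, hp0⟩, ⟨q0, hq0⟩⟩, ⟨⟨p1, hp1⟩, ⟨q1, hq1⟩⟩⟩ := ih
      refine ⟨⟨z * p1 + p0, ?_⟩, ⟨z * q1 + q0, ?_⟩⟩
      · rw [GenContFract.nums_recurrence hgp hp0 hp1, ha, hz]; push_cast; ring
      · rw [GenContFract.dens_recurrence hgp hq0 hq1, ha, hz]; push_cast; ring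
  exact (key n).1

lemma cf_approx (ν : ℝ) (hν : Irrational ν) (n : ℕ) :
    |ν * cfDen ν n - (GenContFract.of ν).nums n| ≤ 1 / cfDen ν (n + 1) := by
  have h := GenContFract.abs_sub_convs_le (v := ν) (n := n) (cf_not_term ν hν n)
  rw [GenContFract.conv_eq_num_div_den] at h
  have hd : (0:ℝ) < cfDen ν n := lt_of_lt_of_le one_pos (one_le_cfDen ν hν n)
  have hd' : (0:ℝ) < cfDen ν (n+1) := lt_of_lt_of_le one_pos (one_le_cfDen ν hν (n+1))
  have key : ν * cfDen ν n - (GenContFract.of ν).nums n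
      = (ν - (GenContFract.of ν).nums n / (GenContFract.of ν).dens n) * cfDen ν n := by
    unfold cfDen at hd ⊢
    field_simp
  rw [key, abs_mul, abs_of_pos hd]
  calc |ν - (GenContFract.of ν).nums n / (GenContFract.of ν).dens n| * cfDen ν n
      ≤ 1 / ((GenContFract.of ν).dens n * (GenContFract.of ν).dens (n+1)) * cfDen ν n := by
        apply mul_le_mul_of_nonneg_right h hd.le
    _ = 1 / cfDen ν (n+1) := by
        unfold cfDen at hd hd' ⊢
        field_simp

end Aux

lemma le_psiOmega (ν Q : ℝ) (k : ℤ × ℤ) (h1 : 0 < max |k.1| |k.2|)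
    (h2 : ((max |k.1| |k.2| : ℤ) : ℝ) < Q) :
    |(k.1 : ℝ) + (k.2 : ℝ) * ν|⁻¹ ≤ PsiOmega ν Q := by
  have hfin : Set.Finite {x : ℝ | ∃ k : ℤ × ℤ, 0 < max |k.1| |k.2| ∧
      ((max |k.1| |k.2| : ℤ) : ℝ) < Q ∧ x = |(k.1 : ℝ) + (k.2 : ℝ) * ν|⁻¹} := by
    apply Set.Finite.subset (Set.Finite.image
      (fun k : ℤ × ℤ => |(k.1 : ℝ) + (k.2 : ℝ) * ν|⁻¹)
      ((Set.finite_Icc (-⌈Q⌉) ⌈Q⌉).prod (Set.finite_Icc (-⌈Q⌉) ⌈Q⌉)))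
    rintro x ⟨j, hj1, hj2, rfl⟩
    have hm : max |j.1| |j.2| ≤ ⌈Q⌉ := by
      have : ((max |j.1| |j.2| : ℤ) : ℝ) ≤ (⌈Q⌉ : ℝ) := le_trans hj2.le (Int.le_ceil Q)
      exact_mod_cast this
    have hb1 := abs_le.mp (le_trans (le_max_left _ _) hm)
    have hb2 := abs_le.mp (le_trans (le_max_right _ _) hm)
    exact ⟨j, ⟨⟨hb1.1, hb1.2⟩, hb2.1, hb2.2⟩, rfl⟩
  exact le_csSup hfin.bddAbove ⟨k, h1, h2, rfl⟩

lemma psi_lower (ν : ℝ) (hν : Irrational ν) (n : ℕ) (x : ℝ)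
    (hx : (|ν| + 2) * cfDen ν n < x) : cfDen ν (n + 1) ≤ PsiOmega ν x := by
  obtain ⟨⟨p, hp⟩, ⟨q, hq⟩⟩ := cf_int ν hν n
  have hqn1 : (1:ℝ) ≤ cfDen ν n := one_le_cfDen ν hν n
  have hqn1' : (1:ℝ) ≤ cfDen ν (n+1) := one_le_cfDen ν hν (n+1)
  have hq1 : (1:ℤ) ≤ q := by exact_mod_cast hq ▸ hqn1
  have hq0R : (0:ℝ) < (q:ℝ) := by exact_mod_cast lt_of_lt_of_le one_pos hq1
  have happrox := cf_approx ν hν n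
  rw [hp, hq] at happrox
  have hd'0 : (0:ℝ) < cfDen ν (n+1) := by linarith
  -- the value p - q ν is nonzero
  have hne : ν * (q:ℝ) - (p:ℝ) ≠ 0 := by
    intro h
    apply hν
    refine ⟨(p : ℚ) / (q : ℚ), ?_⟩
    have hq0 : (q:ℝ) ≠ 0 := hq0R.ne'
    push_cast
    field_simp
    linarith
  have habs0 : 0 < |ν * (q:ℝ) - (p:ℝ)| := abs_pos.mpr hne
  -- bound on |p|
  have hple : |(p:ℝ)| ≤ (|ν| + 1) * (q:ℝ) := by
    have h1 : |(p:ℝ)| ≤ |ν * (q:ℝ)| + |ν * (q:ℝ) - (p:ℝ)| := by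
      calc |(p:ℝ)| = |ν * q - (ν * q - p)| := by ring_nf
        _ ≤ |ν * (q:ℝ)| + |ν * (q:ℝ) - (p:ℝ)| := abs_sub _ _
    have h3 : |ν * (q:ℝ)| = |ν| * (q:ℝ) := by
      rw [abs_mul, abs_of_pos hq0R]
    have h4 : 1 / cfDen ν (n+1) ≤ 1 := by
      rw [div_le_one (by linarith)]; linarith
    have hq0 : (1:ℝ) ≤ (q:ℝ) := by exact_mod_cast hq1
    nlinarith [h1, happrox]
  -- the inverse bound
  have hinv : cfDen ν (n+1) ≤ |ν * (q:ℝ) - (p:ℝ)|⁻¹ := by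
    rw [← one_div, le_div_iff₀ habs0]
    have := mul_le_mul_of_nonneg_left happrox hd'0.le
    rw [mul_one_div, div_self hd'0.ne'] at this
    linarith
  -- membership data for k = (p, -q)
  have h1 : 0 < max |p| |(-q)| := by
    have : (0:ℤ) < |(-q)| := by rw [abs_neg]; exact abs_pos.mpr (by omega)
    exact lt_of_lt_of_le this (le_max_right _ _)
  have h2 : ((max |p| |(-q)| : ℤ) : ℝ) < x := by
    push_cast [abs_neg]
    apply max_lt
    · calc |(p:ℝ)| ≤ (|ν| + 1) * (q:ℝ) := hple
        _ < (|ν| + 2) * (q:ℝ) := by nlinarith [abs_nonneg ν]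
        _ = (|ν| + 2) * cfDen ν n := by rw [hq]
        _ < x := hx
    · calc |(q:ℝ)| = (q:ℝ) := abs_of_pos hq0R
        _ = cfDen ν n := hq.symm
        _ < (|ν| + 2) * cfDen ν n := by nlinarith [abs_nonneg ν]
        _ < x := hx
  have hle := le_psiOmega ν x (p, -q) h1 h2
  refine le_trans hinv ?_
  have hval : |ν * (q:ℝ) - (p:ℝ)| = |(((p, -q).1 : ℤ) : ℝ) + (((p, -q).2 : ℤ) : ℝ) * ν| := by
    show |ν * (q:ℝ) - (p:ℝ)| = |(p:ℝ) + ((-q : ℤ) : ℝ) * ν|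
    push_cast
    rw [show (p:ℝ) + -((q:ℝ)) * ν = -(ν * q - p) by ring, abs_neg]
  rw [hval]
  exact hle

lemma core_ineq {β q q' C : ℝ} (hβ0 : 0 < β) (hβ1 : β ≤ 1) (hq : 1 ≤ q)
    (hq' : q + 1 ≤ q') (hC : 1 ≤ C) :
    C ^ (-β) / 2 / q ^ (1 + β) ≤ ((C * q') ^ (-β) - (C * q) ^ (-β)) / (-β) := by
  have hq0 : (0:ℝ) < q := lt_of_lt_of_le one_pos hq
  have hq'0 : (0:ℝ) < q' := by linarith
  have hC0 : (0:ℝ) < C := lt_of_lt_of_le one_pos hC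
  have hx0 : (0:ℝ) ≤ q / q' := by positivity
  have hx1 : q / q' ≤ 1 := by rw [div_le_one hq'0]; linarith
  have hber : (q / q') ^ β ≤ β * (q / q') + (1 - β) := by
    have := Real.geom_mean_le_arith_mean2_weighted hβ0.le (by linarith : (0:ℝ) ≤ 1 - β)
      hx0 (zero_le_one) (by ring)
    simpa [Real.one_rpow] using this
  have hgap : q / q' ≤ 1 - 1 / (2 * q) := by
    have h1 : q / q' ≤ (2 * q - 1) / (2 * q) := by
      rw [div_le_div_iff₀ hq'0 (by positivity)]; nlinarith
    have h2 : (2 * q - 1) / (2 * q) = 1 - 1 / (2 * q) := by field_simp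
    linarith [h2 ▸ h1]
  have hqβ : (0:ℝ) < q ^ β := Real.rpow_pos_of_pos hq0 β
  have hq'β : (0:ℝ) < q' ^ β := Real.rpow_pos_of_pos hq'0 β
  have hCβ : (0:ℝ) < C ^ β := Real.rpow_pos_of_pos hC0 β
  have e1 : (C * q) ^ (-β) * (q / q') ^ β = (C * q') ^ (-β) := by
    rw [Real.rpow_neg (by positivity), Real.rpow_neg (by positivity),
      Real.div_rpow hq0.le hq'0.le, Real.mul_rpow hC0.le hq0.le,
      Real.mul_rpow hC0.le hq'0.le]
    field_simp
  have e2 : (C * q) ^ (-β) = C ^ (-β) * q ^ (-β) := Real.mul_rpow hC0.le hq0.le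
  have hpos : (0:ℝ) < (C * q) ^ (-β) := Real.rpow_pos_of_pos (by positivity) _
  have hdiff : (C * q) ^ (-β) * (β * (1 / (2 * q)))
      ≤ (C * q) ^ (-β) - (C * q') ^ (-β) := by
    have hrw : (C * q) ^ (-β) - (C * q') ^ (-β)
        = (C * q) ^ (-β) * (1 - (q / q') ^ β) := by rw [mul_sub, mul_one, e1]
    rw [hrw]
    apply mul_le_mul_of_nonneg_left _ hpos.le
    nlinarith [mul_le_mul_of_nonneg_left hgap hβ0.le]
  rw [div_neg, ← neg_div, neg_sub]
  rw [le_div_iff₀ hβ0]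
  calc C ^ (-β) / 2 / q ^ (1 + β) * β = (C * q) ^ (-β) * (β * (1 / (2 * q))) := by
        rw [e2, Real.rpow_neg hq0.le, Real.rpow_add hq0, Real.rpow_one,
          Real.rpow_neg hC0.le]
        field_simp
    _ ≤ _ := hdiff

lemma integral_eval {β L a b : ℝ} (hβ0 : 0 < β) (ha : 0 < a) (hab : a ≤ b) :
    ∫ x in Set.Ioc a b, L / x ^ (1 + β)
      = L * ((b ^ (-β) - a ^ (-β)) / (-β)) := by
  rw [← intervalIntegral.integral_of_le hab]
  have hcong : Set.EqOn (fun x : ℝ => L / x ^ (1 + β))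
      (fun x => L * x ^ (-(1 + β))) (Set.uIcc a b) := by
    intro x hx
    rw [Set.uIcc_of_le hab] at hx
    have hx0 : 0 < x := lt_of_lt_of_le ha hx.1
    simp only
    rw [Real.rpow_neg hx0.le, div_eq_mul_inv]
  rw [intervalIntegral.integral_congr hcong, intervalIntegral.integral_const_mul,
    integral_rpow (Or.inr ⟨by intro h; apply hβ0.ne'; linarith [neg_eq_iff_eq_neg.mp h],
      by rw [Set.uIcc_of_le hab]; exact fun h => absurd h.1 (by linarith)⟩)]
  have h2 : -(1 + β) + 1 = -β := by ring
  rw [h2]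

lemma integrable_piece {β L a b : ℝ} (ha : 0 < a) :
    MeasureTheory.IntegrableOn (fun x : ℝ => L / x ^ (1 + β)) (Set.Ioc a b) := by
  have hc : ContinuousOn (fun x : ℝ => L / x ^ (1 + β)) (Set.Icc a b) := by
    apply ContinuousOn.div continuousOn_const
    · exact ContinuousOn.rpow_const continuousOn_id
        (fun x hx => Or.inl (ne_of_gt (lt_of_lt_of_le ha hx.1)))
    · exact fun x hx => ne_of_gt (Real.rpow_pos_of_pos (lt_of_lt_of_le ha hx.1) _)
  exact (hc.integrableOn_Icc).mono_set Set.Ioc_subset_Icc_self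

/-- If `∑ₙ (log Q_{n+1}) / Qₙ^{1+1/α} = +∞`, then the `α`-Brjuno–Rüssmann integral
`∫_1^∞ (log Ψ_ω(Q)) / Q^{1+1/α} dQ` for `ω = (1, ν)` diverges. -/
theorem capacity_stmt7 (ν : ℝ) (hν : Irrational ν) (α : ℝ) (hα : 1 ≤ α)
    (hdiv : ∑' n : ℕ,
      ENNReal.ofReal (Real.log (cfDen ν (n + 1)) / (cfDen ν n) ^ (1 + 1 / α)) = ⊤) :
    ∫⁻ Q in Set.Ici (1 : ℝ),
      ENNReal.ofReal (Real.log (PsiOmega ν Q) / Q ^ (1 + 1 / α)) = ⊤ := by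
  have hα0 : (0:ℝ) < α := lt_of_lt_of_le one_pos hα
  set β : ℝ := 1 / α with hβdef
  have hβ0 : 0 < β := by positivity
  have hβ1 : β ≤ 1 := by rw [hβdef, div_le_one hα0]; exact hα
  set C : ℝ := |ν| + 2 with hCdef
  have hC1 : (1:ℝ) ≤ C := by have := abs_nonneg ν; rw [hCdef]; linarith
  have hC0 : (0:ℝ) < C := by linarith
  set c : ℝ := C ^ (-β) / 2 with hcdef
  have hc0 : (0:ℝ) < c := by rw [hcdef]; positivity
  have hQ1 : ∀ n, (1:ℝ) ≤ cfDen ν n := one_le_cfDen ν hν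
  set t : ℕ → ℝ := fun n => C * cfDen ν n with htdef
  have htmono : Monotone t := fun m n h => mul_le_mul_of_nonneg_left (cfDen_mono ν h) hC0.le
  have hdisj : Pairwise (Function.onFun Disjoint fun n => Set.Ioc (t n) (t (n + 1))) := by
    have := htmono.pairwise_disjoint_on_Ioc_succ
    simpa [Order.succ_eq_add_one] using this
  have key : ∀ n : ℕ,
      ENNReal.ofReal (c * (Real.log (cfDen ν (n + 1)) / cfDen ν n ^ (1 + β)))
      ≤ ∫⁻ x in Set.Ioc (t n) (t (n + 1)),
          ENNReal.ofReal (Real.log (PsiOmega ν x) / x ^ (1 + β)) := by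
    intro n
    have hL : 0 ≤ Real.log (cfDen ν (n + 1)) := Real.log_nonneg (hQ1 (n + 1))
    by_cases hstep : cfDen ν n + 1 ≤ cfDen ν (n + 1)
    · have ha0 : 0 < t n := mul_pos hC0 (lt_of_lt_of_le one_pos (hQ1 n))
      have hab : t n ≤ t (n + 1) := htmono (Nat.le_succ n)
      have hpt : ∀ x ∈ Set.Ioc (t n) (t (n + 1)),
          ENNReal.ofReal (Real.log (cfDen ν (n + 1)) / x ^ (1 + β))
            ≤ ENNReal.ofReal (Real.log (PsiOmega ν x) / x ^ (1 + β)) := by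
        intro x hx
        have hx0 : 0 < x := lt_trans ha0 hx.1
        have hxp : 0 < x ^ (1 + β) := Real.rpow_pos_of_pos hx0 _
        have hpsi : cfDen ν (n + 1) ≤ PsiOmega ν x := psi_lower ν hν n x hx.1
        apply ENNReal.ofReal_le_ofReal
        have hlog : Real.log (cfDen ν (n + 1)) ≤ Real.log (PsiOmega ν x) :=
          Real.log_le_log (lt_of_lt_of_le one_pos (hQ1 (n + 1))) hpsi
        gcongr
      have hnn : 0 ≤ᵐ[volume.restrict (Set.Ioc (t n) (t (n + 1)))]
          fun x : ℝ => Real.log (cfDen ν (n + 1)) / x ^ (1 + β) :=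
        (ae_restrict_iff' measurableSet_Ioc).mpr (ae_of_all _ fun x hx =>
          div_nonneg hL (Real.rpow_nonneg (le_of_lt (lt_trans ha0 hx.1)) _))
      calc ENNReal.ofReal (c * (Real.log (cfDen ν (n + 1)) / cfDen ν n ^ (1 + β)))
          ≤ ENNReal.ofReal (∫ x in Set.Ioc (t n) (t (n + 1)),
              Real.log (cfDen ν (n + 1)) / x ^ (1 + β)) := by
            apply ENNReal.ofReal_le_ofReal
            rw [integral_eval hβ0 ha0 hab]
            have hcore := core_ineq hβ0 hβ1 (hQ1 n) hstep hC1
            calc c * (Real.log (cfDen ν (n + 1)) / cfDen ν n ^ (1 + β))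
                = Real.log (cfDen ν (n + 1)) * (c / cfDen ν n ^ (1 + β)) := by ring
              _ ≤ Real.log (cfDen ν (n + 1))
                  * ((t (n + 1)) ^ (-β) - (t n) ^ (-β)) / (-β) := by
                  rw [mul_div_assoc]
                  apply mul_le_mul_of_nonneg_left _ hL
                  rw [hcdef]
                  exact hcore
              _ = Real.log (cfDen ν (n + 1))
                  * (((t (n + 1)) ^ (-β) - (t n) ^ (-β)) / (-β)) := by
                  rw [mul_div_assoc]
        _ = ∫⁻ x in Set.Ioc (t n) (t (n + 1)),
              ENNReal.ofReal (Real.log (cfDen ν (n + 1)) / x ^ (1 + β)) :=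
            MeasureTheory.ofReal_integral_eq_lintegral_ofReal (integrable_piece ha0) hnn
        _ ≤ _ := setLIntegral_mono' measurableSet_Ioc hpt
    · -- degenerate case: then `cfDen ν (n+1) = 1` and the left side vanishes
      have heq : cfDen ν (n + 1) = 1 := by
        cases n with
        | zero =>
          obtain ⟨-, q', hq'⟩ := cf_int ν hν 1
          have h0 : cfDen ν 0 = 1 := by
            unfold cfDen; rw [GenContFract.zeroth_den_eq_one]
          have h1 : (1:ℝ) ≤ (q' : ℝ) := hq' ▸ hQ1 1
          have h2 : (q' : ℝ) < 2 := by rw [← hq']; rw [h0] at hstep; linarith [not_le.mp hstep]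
          have : q' = 1 := by
            have h1' : (1:ℤ) ≤ q' := by exact_mod_cast h1
            have h2' : q' < 2 := by exact_mod_cast h2
            omega
          rw [hq', this]; norm_num
        | succ m =>
          exfalso
          have := cfDen_step ν hν m
          have := hQ1 m
          have := not_le.mp hstep
          linarith
      rw [heq]
      simp [Real.log_one]
  have hsub : (⋃ n, Set.Ioc (t n) (t (n + 1))) ⊆ Set.Ici (1:ℝ) := by
    intro x hx
    simp only [Set.mem_iUnion] at hx
    obtain ⟨n, hn⟩ := hx
    have h1 : (1:ℝ) ≤ t n := by
      have := hQ1 n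
      calc (1:ℝ) ≤ 1 * 1 := by norm_num
        _ ≤ C * cfDen ν n := by apply mul_le_mul hC1 this zero_le_one hC0.le
    exact le_trans h1 hn.1.le
  have chain : (⊤ : ℝ≥0∞) ≤ ∫⁻ Q in Set.Ici (1 : ℝ),
      ENNReal.ofReal (Real.log (PsiOmega ν Q) / Q ^ (1 + β)) := by
    calc (⊤ : ℝ≥0∞)
        = ENNReal.ofReal c * ∑' n : ℕ,
            ENNReal.ofReal (Real.log (cfDen ν (n + 1)) / cfDen ν n ^ (1 + β)) := by
          rw [hdiv, ENNReal.mul_top ((ENNReal.ofReal_pos.mpr hc0).ne')]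
      _ = ∑' n : ℕ, ENNReal.ofReal (c * (Real.log (cfDen ν (n + 1)) / cfDen ν n ^ (1 + β))) := by
          rw [← ENNReal.tsum_mul_left]
          exact tsum_congr fun n => (ENNReal.ofReal_mul hc0.le).symm
      _ ≤ ∑' n : ℕ, ∫⁻ x in Set.Ioc (t n) (t (n + 1)),
            ENNReal.ofReal (Real.log (PsiOmega ν x) / x ^ (1 + β)) :=
          ENNReal.tsum_le_tsum key
      _ = ∫⁻ x in ⋃ n, Set.Ioc (t n) (t (n + 1)),
            ENNReal.ofReal (Real.log (PsiOmega ν x) / x ^ (1 + β)) :=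
          (lintegral_iUnion (fun _ => measurableSet_Ioc) hdisj _).symm
      _ ≤ _ := lintegral_mono_set hsub
  exact top_le_iff.mp chain
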